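/- arXiv:1609.07625 — 3 statements merged into one kernel-verified Lean document; each statement's English description precedes it below -/
import Mathlib

section
/- Let f : ℝ → ℝ be infinitely differentiable, z ∈ ℝ, ξ > 0 and δ ∈ (0,1), and assume f'(z) ≠ 0. For Δx > 0 set f_m = f(z + (2m−1)Δx/2) for m = −2,…,2, define L_{1,0} = f₋₂ − 3f₋₁ + 2f₀, L_{1,1} = L_{1,2} = −f₀ + f₁, L_{2,0} = f₋₂ − 2f₋₁ + f₀, L_{2,1} = f₋₁ − 2f₀ + f₁, L_{2,2} = f₀ − 2f₁ + f₂, the smoothness indicators β_k = ξ·|L_{1,k}| + |L_{2,k}|, the adjusted indicators β̃₀ = β₀, β̃₁ = (1+δ)β₁, β̃₂ = (1−δ)β₂, the global indicator η = (L_{2,0} + L_{2,2} − 2L_{2,1})², and with d₀ = 1/10, d₁ = 6/10, d₂ = 3/10 the MWENO-P weights α_k(Δx) = d_k·(1 + η/β̃_k²) and ω_k(Δx) = α_k(Δx)/(α₀(Δx) + α₁(Δx) + α₂(Δx)). Then for each k ∈ {0,1,2}, ω_k(Δx) − d_k = O(Δx³) as Δx → 0⁺. -/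
open Filter Asymptotics Topology

/-- Grid value `f_m = f(z + (2m-1)Δx/2)` at the node `x_{j+m}`, where `z` is the
cell interface `x_{j+1/2}`. -/
noncomputable def gridVal (f : ℝ → ℝ) (z Δx : ℝ) (m : ℤ) : ℝ :=
  f (z + (2 * (m : ℝ) - 1) * Δx / 2)

/-- First-order generalized undivided difference `L_{1,0}f`. -/
noncomputable def L10 (f : ℝ → ℝ) (z Δx : ℝ) : ℝ :=
  gridVal f z Δx (-2) - 3 * gridVal f z Δx (-1) + 2 * gridVal f z Δx 0

/-- First-order generalized undivided difference `L_{1,1}f = L_{1,2}f`. -/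
noncomputable def L11 (f : ℝ → ℝ) (z Δx : ℝ) : ℝ :=
  -gridVal f z Δx 0 + gridVal f z Δx 1

/-- Second-order generalized undivided difference `L_{2,0}f`. -/
noncomputable def L20 (f : ℝ → ℝ) (z Δx : ℝ) : ℝ :=
  gridVal f z Δx (-2) - 2 * gridVal f z Δx (-1) + gridVal f z Δx 0

/-- Second-order generalized undivided difference `L_{2,1}f`. -/
noncomputable def L21 (f : ℝ → ℝ) (z Δx : ℝ) : ℝ :=
  gridVal f z Δx (-1) - 2 * gridVal f z Δx 0 + gridVal f z Δx 1

/-- Second-order generalized undivided difference `L_{2,2}f`. -/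
noncomputable def L22 (f : ℝ → ℝ) (z Δx : ℝ) : ℝ :=
  gridVal f z Δx 0 - 2 * gridVal f z Δx 1 + gridVal f z Δx 2

/-- WENO-NS local smoothness indicator `β_k = ξ|L_{1,k}f| + |L_{2,k}f|`. -/
noncomputable def betaNS (f : ℝ → ℝ) (z ξ : ℝ) (k : Fin 3) (Δx : ℝ) : ℝ :=
  if k = 0 then ξ * |L10 f z Δx| + |L20 f z Δx|
  else if k = 1 then ξ * |L11 f z Δx| + |L21 f z Δx|
  else ξ * |L11 f z Δx| + |L22 f z Δx|

/-- Adjusted (WENO-P) smoothness indicators `β̃₀ = β₀`, `β̃₁ = (1+δ)β₁`, `β̃₂ = (1-δ)β₂`. -/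
noncomputable def betaTilde (f : ℝ → ℝ) (z ξ δ : ℝ) (k : Fin 3) (Δx : ℝ) : ℝ :=
  if k = 0 then betaNS f z ξ 0 Δx
  else if k = 1 then (1 + δ) * betaNS f z ξ 1 Δx
  else (1 - δ) * betaNS f z ξ 2 Δx

/-- MWENO-P global smoothness indicator `η = (L_{2,0}f + L_{2,2}f - 2L_{2,1}f)²`. -/
noncomputable def etaMP (f : ℝ → ℝ) (z Δx : ℝ) : ℝ :=
  (L20 f z Δx + L22 f z Δx - 2 * L21 f z Δx) ^ 2

/-- The ideal weights `d₀ = 1/10, d₁ = 6/10, d₂ = 3/10`. -/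
noncomputable def dIdeal : Fin 3 → ℝ := ![1 / 10, 6 / 10, 3 / 10]

/-- Unnormalized MWENO-P weight (with `ε = 0`). -/
noncomputable def alphaMP (f : ℝ → ℝ) (z ξ δ : ℝ) (k : Fin 3) (Δx : ℝ) : ℝ :=
  dIdeal k * (1 + etaMP f z Δx / (betaTilde f z ξ δ k Δx) ^ 2)

/-- Normalized MWENO-P nonlinear weight (with `ε = 0`). -/
noncomputable def omegaMP (f : ℝ → ℝ) (z ξ δ : ℝ) (k : Fin 3) (Δx : ℝ) : ℝ :=
  alphaMP f z ξ δ k Δx /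
    (alphaMP f z ξ δ 0 Δx + alphaMP f z ξ δ 1 Δx + alphaMP f z ξ δ 2 Δx)

private lemma hasDerivAt_shift' {g : ℝ → ℝ} (hg : Differentiable ℝ g) (z a t : ℝ) :
    HasDerivAt (fun h : ℝ => g (z + a * h)) (a * deriv g (z + a * t)) t := by
  have h1 : HasDerivAt (fun h : ℝ => z + a * h) a t := by
    simpa using ((hasDerivAt_id t).const_mul a).const_add z
  have h2 := ((hg (z + a * t)).hasDerivAt).comp t h1
  rw [mul_comm (deriv g (z + a * t)) a] at h2
  exact h2

private lemma slope_to' {G : ℝ → ℝ} {cG : ℝ} (h0 : G 0 = 0) (hG : HasDerivAt G cG 0) :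
    Filter.Tendsto (fun h => G h / h) (nhdsWithin (0:ℝ) (Set.Ioi 0)) (nhds cG) := by
  have h1 := hasDerivAt_iff_tendsto_slope.mp hG
  have hsub : Set.Ioi (0:ℝ) ⊆ {(0:ℝ)}ᶜ := by
    intro x hx
    simp only [Set.mem_compl_iff, Set.mem_singleton_iff]
    exact ne_of_gt hx
  have h2 := h1.mono_left (nhdsWithin_mono 0 hsub)
  refine h2.congr fun h => ?_
  simp [slope_def_field, h0]

private lemma cube_bound' {g : ℝ → ℝ} (hg : ContDiff ℝ ((⊤:ℕ∞) : WithTop ℕ∞) g) (h0 : g 0 = 0)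
    (h1 : deriv g 0 = 0) (h2 : deriv (deriv g) 0 = 0) :
    g =O[nhdsWithin (0:ℝ) (Set.Ioi 0)] fun h => h ^ 3 := by
  have hg1 : ContDiff ℝ ((⊤:ℕ∞) : WithTop ℕ∞) (deriv g) := (contDiff_infty_iff_deriv.mp hg).2
  have hg2 : ContDiff ℝ ((⊤:ℕ∞) : WithTop ℕ∞) (deriv (deriv g)) :=
    (contDiff_infty_iff_deriv.mp hg1).2
  have hg3c : Continuous (deriv (deriv (deriv g))) :=
    ((contDiff_infty_iff_deriv.mp hg2).2).continuous
  obtain ⟨M, hM⟩ := isCompact_Icc.exists_bound_of_continuousOn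
    (s := Set.Icc (0:ℝ) 1) hg3c.continuousOn
  have hM0 : 0 ≤ M := le_trans (norm_nonneg _) (hM 0 (by norm_num))
  have step : ∀ (F : ℝ → ℝ), Differentiable ℝ F → F 0 = 0 → ∀ (C t : ℝ), 0 ≤ t →
      (∀ s ∈ Set.Icc (0:ℝ) t, |deriv F s| ≤ C) → |F t| ≤ C * t := by
    intro F hF hF0 C t ht hb
    have := norm_image_sub_le_of_norm_deriv_le_segment' (f := F) (f' := deriv F) (a := 0) (b := t)
      (fun x _ => (hF x).hasDerivAt.hasDerivWithinAt)
      (fun x hx => hb x (Set.Ico_subset_Icc_self hx)) t (Set.right_mem_Icc.2 ht)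
    simpa [hF0, Real.norm_eq_abs] using this
  have b2 : ∀ t ∈ Set.Icc (0:ℝ) 1, |deriv (deriv g) t| ≤ M * t := by
    intro t ht
    refine step _ (hg2.differentiable (by simp)) h2 M t ht.1 (fun s hs => ?_)
    simpa [Real.norm_eq_abs] using hM s ⟨hs.1, le_trans hs.2 ht.2⟩
  have b1 : ∀ t ∈ Set.Icc (0:ℝ) 1, |deriv g t| ≤ M * t * t := by
    intro t ht
    refine step _ (hg1.differentiable (by simp)) h1 (M * t) t ht.1 (fun s hs => ?_)
    exact le_trans (b2 s ⟨hs.1, le_trans hs.2 ht.2⟩)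
      (by nlinarith [mul_le_mul_of_nonneg_left hs.2 hM0])
  have b0 : ∀ t ∈ Set.Icc (0:ℝ) 1, |g t| ≤ M * t * t * t := by
    intro t ht
    refine step _ (hg.differentiable (by simp)) h0 (M * t * t) t ht.1 (fun s hs => ?_)
    exact le_trans (b1 s ⟨hs.1, le_trans hs.2 ht.2⟩)
      (by nlinarith [mul_le_mul_of_nonneg_left (mul_self_le_mul_self hs.1 hs.2) hM0])
  rw [Asymptotics.isBigO_iff]
  refine ⟨M, ?_⟩
  filter_upwards [Ioc_mem_nhdsGT one_pos] with t ht
  have := b0 t ⟨ht.1.le, ht.2⟩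
  rw [Real.norm_eq_abs, Real.norm_eq_abs, abs_of_pos (pow_pos ht.1 3)]
  nlinarith [this]

set_option maxHeartbeats 1000000 in
/-- Away from critical points (`f'(z) ≠ 0`), the MWENO-P nonlinear weights satisfy the
sufficient condition `ω_k - d_k = O(Δx³)` for fifth-order convergence, as `Δx → 0⁺`. -/
theorem mwenoP_weights_smooth (f : ℝ → ℝ) (hf : ContDiff ℝ (⊤ : ℕ∞) f) (z : ℝ) (ξ δ : ℝ)
    (hξ : 0 < ξ) (hδ : δ ∈ Set.Ioo (0 : ℝ) 1) (hf' : deriv f z ≠ 0) :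
    ∀ k : Fin 3,
      (fun Δx : ℝ => omegaMP f z ξ δ k Δx - dIdeal k)
        =O[𝓝[>] (0 : ℝ)] fun Δx => Δx ^ 3 := by
  have hsm : ContDiff ℝ ((⊤:ℕ∞) : WithTop ℕ∞) f := hf.of_le (by simp)
  have hdf : Differentiable ℝ f := hsm.differentiable (by simp)
  have hsm1 : ContDiff ℝ ((⊤:ℕ∞) : WithTop ℕ∞) (deriv f) := (contDiff_infty_iff_deriv.mp hsm).2
  have hdf1 : Differentiable ℝ (deriv f) := hsm1.differentiable (by simp)
  set l : Filter ℝ := nhdsWithin (0:ℝ) (Set.Ioi 0) with hl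
  set D : ℝ → ℝ := fun h => f (z + (-5/2) * h) - 4 * f (z + (-3/2) * h) + 6 * f (z + (-1/2) * h)
      - 4 * f (z + (1/2) * h) + f (z + (3/2) * h) with hD
  set D1 : ℝ → ℝ := fun h => (-5/2) * deriv f (z + (-5/2) * h) + 6 * deriv f (z + (-3/2) * h)
      - 3 * deriv f (z + (-1/2) * h) - 2 * deriv f (z + (1/2) * h)
      + (3/2) * deriv f (z + (3/2) * h) with hD1
  set D2 : ℝ → ℝ := fun h => (25/4) * deriv (deriv f) (z + (-5/2) * h)
      - 9 * deriv (deriv f) (z + (-3/2) * h) + (3/2) * deriv (deriv f) (z + (-1/2) * h)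
      - deriv (deriv f) (z + (1/2) * h) + (9/4) * deriv (deriv f) (z + (3/2) * h) with hD2
  have hDd : ∀ t, HasDerivAt D (D1 t) t := by
    intro t
    have h := ((((hasDerivAt_shift' hdf z (-5/2) t).sub
        ((hasDerivAt_shift' hdf z (-3/2) t).const_mul 4)).add
        ((hasDerivAt_shift' hdf z (-1/2) t).const_mul 6)).sub
        ((hasDerivAt_shift' hdf z (1/2) t).const_mul 4)).add
        (hasDerivAt_shift' hdf z (3/2) t)
    exact h.congr_deriv (by simp only [hD1]; ring)
  have hD1d : ∀ t, HasDerivAt D1 (D2 t) t := by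
    intro t
    have h := (((((hasDerivAt_shift' hdf1 z (-5/2) t).const_mul (-5/2:ℝ)).add
        ((hasDerivAt_shift' hdf1 z (-3/2) t).const_mul 6)).sub
        ((hasDerivAt_shift' hdf1 z (-1/2) t).const_mul 3)).sub
        ((hasDerivAt_shift' hdf1 z (1/2) t).const_mul 2)).add
        ((hasDerivAt_shift' hdf1 z (3/2) t).const_mul (3/2:ℝ))
    exact h.congr_deriv (by simp only [hD2]; ring)
  have hderivD : deriv D = D1 := funext fun t => (hDd t).deriv
  have hderivD1 : deriv D1 = D2 := funext fun t => (hD1d t).deriv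
  have hD0 : D 0 = 0 := by simp only [hD]; norm_num; ring
  have hD10 : D1 0 = 0 := by simp only [hD1]; norm_num; ring
  have hD20 : D2 0 = 0 := by simp only [hD2]; norm_num; ring
  have hshift : ∀ a : ℝ, ContDiff ℝ ((⊤:ℕ∞) : WithTop ℕ∞) (fun h : ℝ => f (z + a * h)) :=
    fun a => hsm.comp (contDiff_const.add (contDiff_const.mul contDiff_id))
  have hDsm : ContDiff ℝ ((⊤:ℕ∞) : WithTop ℕ∞) D := by
    rw [hD]
    exact ((((hshift (-5/2)).sub (contDiff_const.mul (hshift (-3/2)))).add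
      (contDiff_const.mul (hshift (-1/2)))).sub
      (contDiff_const.mul (hshift (1/2)))).add (hshift (3/2))
  have hDO : D =O[l] fun h => h ^ 3 :=
    cube_bound' hDsm hD0 (by rw [hderivD]; exact hD10) (by rw [hderivD, hderivD1]; exact hD20)
  have hEtaEq : ∀ h : ℝ, etaMP f z h = (D h) ^ 2 := by
    intro h
    simp only [etaMP, L20, L21, L22, gridVal, hD]
    norm_num
    ring_nf
  have hEtaO : (fun h => etaMP f z h) =O[l] fun h => h ^ 6 := by
    have hmul := hDO.mul hDO
    have e1 : (fun h : ℝ => etaMP f z h) = fun x => D x * D x := by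
      funext h; rw [hEtaEq h]; ring
    have e2 : (fun h : ℝ => h ^ 3 * h ^ 3) = fun h : ℝ => h ^ 6 := by
      funext h; ring
    rw [e1, ← e2]
    exact hmul
  have hL10lim : Filter.Tendsto (fun h => L10 f z h / h) l (nhds (deriv f z)) := by
    have hG0 : (fun h : ℝ => f (z + (-5/2) * h) - 3 * f (z + (-3/2) * h)
        + 2 * f (z + (-1/2) * h)) 0 = 0 := by norm_num; ring
    have hGd : HasDerivAt (fun h : ℝ => f (z + (-5/2) * h) - 3 * f (z + (-3/2) * h)
        + 2 * f (z + (-1/2) * h)) (deriv f z) 0 := by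
      have h := ((hasDerivAt_shift' hdf z (-5/2) 0).sub
        ((hasDerivAt_shift' hdf z (-3/2) 0).const_mul 3)).add
        ((hasDerivAt_shift' hdf z (-1/2) 0).const_mul 2)
      exact h.congr_deriv (by simp only [mul_zero, add_zero]; ring)
    refine (slope_to' hG0 hGd).congr fun h => ?_
    have e : L10 f z h = f (z + (-5/2) * h) - 3 * f (z + (-3/2) * h)
        + 2 * f (z + (-1/2) * h) := by
      simp only [L10, gridVal]
      norm_num
      ring_nf
    rw [e]
  have hL11lim : Filter.Tendsto (fun h => L11 f z h / h) l (nhds (deriv f z)) := by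
    have hG0 : (fun h : ℝ => -f (z + (-1/2) * h) + f (z + (1/2) * h)) 0 = 0 := by
      norm_num
    have hGd : HasDerivAt (fun h : ℝ => -f (z + (-1/2) * h) + f (z + (1/2) * h))
        (deriv f z) 0 := by
      have h := ((hasDerivAt_shift' hdf z (-1/2) 0).neg).add
        (hasDerivAt_shift' hdf z (1/2) 0)
      exact h.congr_deriv (by simp only [mul_zero, add_zero]; ring)
    refine (slope_to' hG0 hGd).congr fun h => ?_
    have e : L11 f z h = -f (z + (-1/2) * h) + f (z + (1/2) * h) := by
      simp only [L11, gridVal]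
      norm_num
      ring_nf
    rw [e]
  set c : ℝ := (1 - δ) * (ξ * (|deriv f z| / 2)) with hc
  have habs : 0 < |deriv f z| := abs_pos.mpr hf'
  have hcpos : 0 < c := by
    rw [hc]
    have h1 : 0 < 1 - δ := by linarith [hδ.2]
    exact mul_pos h1 (mul_pos hξ (by positivity))
  have hbeta : ∀ᶠ h in l, ∀ k : Fin 3, c * h ≤ betaTilde f z ξ δ k h := by
    have e10 : ∀ᶠ h in l, |deriv f z| / 2 < |L10 f z h / h| :=
      (tendsto_order.1 hL10lim.abs).1 _ (half_lt_self habs)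
    have e11 : ∀ᶠ h in l, |deriv f z| / 2 < |L11 f z h / h| :=
      (tendsto_order.1 hL11lim.abs).1 _ (half_lt_self habs)
    filter_upwards [e10, e11, self_mem_nhdsWithin] with h h10 h11 hpos
    have hpos' : (0:ℝ) < h := hpos
    have key10 : |deriv f z| / 2 * h ≤ |L10 f z h| := by
      have := mul_le_mul_of_nonneg_right h10.le hpos'.le
      rwa [abs_div, abs_of_pos hpos', div_mul_cancel₀ _ (ne_of_gt hpos')] at this
    have key11 : |deriv f z| / 2 * h ≤ |L11 f z h| := by
      have := mul_le_mul_of_nonneg_right h11.le hpos'.le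
      rwa [abs_div, abs_of_pos hpos', div_mul_cancel₀ _ (ne_of_gt hpos')] at this
    intro k
    fin_cases k
    · show c * h ≤ ξ * |L10 f z h| + |L20 f z h|
      rw [hc]
      nlinarith [mul_le_mul_of_nonneg_left key10 hξ.le, abs_nonneg (L20 f z h),
        mul_nonneg (mul_nonneg hξ.le (by positivity : (0:ℝ) ≤ |deriv f z| / 2)) hpos'.le,
        hδ.1, hδ.2]
    · show c * h ≤ (1 + δ) * (ξ * |L11 f z h| + |L21 f z h|)
      rw [hc]
      nlinarith [mul_le_mul_of_nonneg_left key11 hξ.le, abs_nonneg (L21 f z h),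
        mul_nonneg (mul_nonneg hξ.le (by positivity : (0:ℝ) ≤ |deriv f z| / 2)) hpos'.le,
        hδ.1, hδ.2, mul_nonneg hδ.1.le (add_nonneg (mul_nonneg hξ.le (abs_nonneg (L11 f z h)))
          (abs_nonneg (L21 f z h)))]
    · show c * h ≤ (1 - δ) * (ξ * |L11 f z h| + |L22 f z h|)
      rw [hc]
      have h1 : 0 < 1 - δ := by linarith [hδ.2]
      nlinarith [mul_le_mul_of_nonneg_left key11 hξ.le, abs_nonneg (L22 f z h),
        mul_le_mul_of_nonneg_left (mul_le_mul_of_nonneg_left key11 hξ.le) h1.le]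
  have hr : ∀ k : Fin 3,
      (fun h => etaMP f z h / (betaTilde f z ξ δ k h) ^ 2) =O[l] fun h => h ^ 3 := by
    intro k
    obtain ⟨C, hC⟩ := Asymptotics.isBigO_iff.mp hEtaO
    have hC0 : 0 ≤ C := by
      obtain ⟨h₀, hb, hh₀⟩ := (hC.and self_mem_nhdsWithin).exists
      have hh₀' : (0:ℝ) < h₀ := hh₀
      have h1 : (0:ℝ) ≤ C * ‖h₀ ^ 6‖ := le_trans (norm_nonneg _) hb
      have h2 : (0:ℝ) < ‖h₀ ^ 6‖ := by
        rw [Real.norm_eq_abs]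
        exact abs_pos.mpr (by positivity)
      have h3 : (0:ℝ) * ‖h₀ ^ 6‖ ≤ C * ‖h₀ ^ 6‖ := by rw [zero_mul]; exact h1
      exact le_of_mul_le_mul_right h3 h2
    rw [Asymptotics.isBigO_iff]
    refine ⟨C / c ^ 2, ?_⟩
    filter_upwards [hC, hbeta, Ioc_mem_nhdsGT one_pos] with h hC' hβ hIoc
    have hβk := hβ k
    have hpos : (0:ℝ) < h := hIoc.1
    have hBpos : 0 < betaTilde f z ξ δ k h := lt_of_lt_of_le (mul_pos hcpos hpos) hβk
    have hEnn : 0 ≤ etaMP f z h := by simp only [etaMP]; positivity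
    have h1 : etaMP f z h ≤ C * h ^ 6 := by
      have h1' := hC'
      rw [Real.norm_eq_abs, Real.norm_eq_abs, abs_of_nonneg hEnn,
        abs_of_pos (pow_pos hpos 6)] at h1'
      exact h1'
    have h2 : (c * h) ^ 2 ≤ (betaTilde f z ξ δ k h) ^ 2 :=
      pow_le_pow_left₀ (mul_pos hcpos hpos).le hβk 2
    rw [Real.norm_eq_abs, Real.norm_eq_abs, abs_of_nonneg (div_nonneg hEnn (sq_nonneg _)),
      abs_of_pos (pow_pos hpos 3)]
    calc etaMP f z h / (betaTilde f z ξ δ k h) ^ 2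
        ≤ (C * h ^ 6) / ((c * h) ^ 2) :=
          div_le_div₀ (mul_nonneg hC0 (pow_nonneg hpos.le 6)) h1
            (pow_pos (mul_pos hcpos hpos) 2) h2
      _ = (C / c ^ 2) * h ^ 4 := by
          field_simp [hcpos.ne', hpos.ne']
      _ ≤ (C / c ^ 2) * h ^ 3 := by
          apply mul_le_mul_of_nonneg_left _ (div_nonneg hC0 (sq_nonneg c))
          exact pow_le_pow_of_le_one hpos.le hIoc.2 (by norm_num)
  set r : Fin 3 → ℝ → ℝ := fun k h => etaMP f z h / (betaTilde f z ξ δ k h) ^ 2 with hrdef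
  set s : ℝ → ℝ := fun h => (1/10) * r 0 h + (6/10) * r 1 h + (3/10) * r 2 h with hsdef
  have hrO : ∀ k : Fin 3, (fun h => r k h) =O[l] fun h => h ^ 3 := by
    intro k
    simp only [hrdef]
    exact hr k
  have hsO : s =O[l] fun h => h ^ 3 := by
    have := (((hrO 0).const_mul_left (1/10)).add ((hrO 1).const_mul_left (6/10))).add
      ((hrO 2).const_mul_left (3/10))
    exact this
  have hpow3 : Filter.Tendsto (fun h : ℝ => h ^ 3) l (nhds 0) := by
    have h3 : Filter.Tendsto (fun h : ℝ => h ^ 3) (nhds 0) (nhds 0) := by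
      simpa using (continuous_pow 3).tendsto (0:ℝ)
    exact h3.mono_left nhdsWithin_le_nhds
  have hs0 : Filter.Tendsto s l (nhds 0) := hsO.trans_tendsto hpow3
  have hS : Filter.Tendsto (fun h => 1 + s h) l (nhds 1) := by
    have := (tendsto_const_nhds (α := ℝ) (x := (1:ℝ)) (f := l)).add hs0
    simpa using this
  have hSne : ∀ᶠ h in l, 1 + s h ≠ 0 := by
    filter_upwards [(tendsto_order.1 hS).1 (1/2) (by norm_num)] with h hh
    intro hcon
    rw [hcon] at hh
    norm_num at hh
  have hSinv : Filter.Tendsto (fun h => (1 + s h)⁻¹) l (nhds 1⁻¹) := hS.inv₀ one_ne_zero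
  have hSinvO : (fun h => (1 + s h)⁻¹) =O[l] (fun _ => (1:ℝ)) := hSinv.isBigO_one ℝ
  have d0 : dIdeal 0 = 1/10 := rfl
  have d1 : dIdeal 1 = 6/10 := rfl
  have d2 : dIdeal 2 = 3/10 := rfl
  have hsum : ∀ h, alphaMP f z ξ δ 0 h + alphaMP f z ξ δ 1 h + alphaMP f z ξ δ 2 h
      = 1 + s h := by
    intro h
    simp only [alphaMP, d0, d1, d2, hsdef, hrdef]
    ring
  intro k
  have heq : ∀ᶠ h in l, omegaMP f z ξ δ k h - dIdeal k
      = (dIdeal k * (r k h - s h)) * (1 + s h)⁻¹ := by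
    filter_upwards [hSne] with h hne
    have halpha : alphaMP f z ξ δ k h = dIdeal k * (1 + r k h) := rfl
    simp only [omegaMP, hsum h, halpha]
    field_simp
    ring
  have hRHS : (fun h => (dIdeal k * (r k h - s h)) * (1 + s h)⁻¹) =O[l] fun h => h ^ 3 := by
    have h1 : (fun h => dIdeal k * (r k h - s h)) =O[l] fun h => h ^ 3 :=
      (((hrO k).sub hsO).const_mul_left (dIdeal k))
    have h2 := h1.mul hSinvO
    simpa using h2
  exact Filter.EventuallyEq.trans_isBigO heq hRHS
end

section
/- Let f : ℝ → ℝ be infinitely differentiable, z ∈ ℝ, ξ > 0 and δ ∈ (0,1), and assume f'(z) = 0 and f''(z) ≠ 0. For Δx > 0 set f_m = f(z + (2m−1)Δx/2) for m = −2,…,2, define L_{1,0} = f₋₂ − 3f₋₁ + 2f₀, L_{1,1} = L_{1,2} = −f₀ + f₁, L_{2,0} = f₋₂ − 2f₋₁ + f₀, L_{2,1} = f₋₁ − 2f₀ + f₁, L_{2,2} = f₀ − 2f₁ + f₂, the smoothness indicators β_k = ξ·|L_{1,k}| + |L_{2,k}|, the adjusted indicators β̃₀ = β₀, β̃₁ =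 (1+δ)β₁, β̃₂ = (1−δ)β₂, the global indicator η = (L_{2,0} + L_{2,2} − 2L_{2,1})², and with d₀ = 1/10, d₁ = 6/10, d₂ = 3/10 the MWENO-P weights α_k(Δx) = d_k·(1 + η/β̃_k²) and ω_k(Δx) = α_k(Δx)/(α₀(Δx) + α₁(Δx) + α₂(Δx)). Then η(Δx)/β̃_k(Δx)² = O(Δx⁴) and ω_k(Δx) − d_k = O(Δx³) as Δx → 0⁺, for each k ∈ {0,1,2}. -/
open Filter Asymptotics Topology ContDiff
set_option maxHeartbeats 1000000


theorem taylorRem_isBigO (z : ℝ) (n : ℕ) : ∀ (f : ℝ → ℝ), ContDiff ℝ ∞ f →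
    (fun h : ℝ => f (z + h) - ∑ i ∈ Finset.range (n + 1), iteratedDeriv i f z / (Nat.factorial i : ℝ) * h ^ i)
      =O[𝓝 (0:ℝ)] fun h => h ^ (n + 1) := by
  induction n with
  | zero =>
    intro f hf
    have hd : HasDerivAt (fun h : ℝ => f (z + h)) (deriv f z) 0 := by
      have h0 : HasDerivAt f (deriv f z) (z + id (0:ℝ)) := by
        simpa using ((hf.differentiable (by simp)) z).hasDerivAt
      simpa [Function.comp_def] using h0.comp (0:ℝ) ((hasDerivAt_id (0:ℝ)).const_add z)
    have h1 : (fun h : ℝ => f (z + h) - f (z + 0)) =O[𝓝 (0:ℝ)] fun h => h - 0 :=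
      hd.hasFDerivAt.isBigO_sub
    refine h1.congr (fun h => by simp [Finset.sum_range_succ]) (fun h => by simp)
  | succ n ih =>
    intro f hf
    have hdf : ContDiff ℝ ∞ (deriv f) := (contDiff_infty_iff_deriv.mp hf).2
    obtain ⟨C, hCpos, hC⟩ := (ih (deriv f) hdf).exists_pos
    have hCb := hC.bound
    rw [Metric.eventually_nhds_iff] at hCb
    obtain ⟨ε, hε, hB⟩ := hCb
    have hR' : ∀ h : ℝ, HasDerivAt
        (fun h : ℝ => f (z + h) - ∑ i ∈ Finset.range (n + 1 + 1), iteratedDeriv i f z / (Nat.factorial i : ℝ) * h ^ i)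
        (deriv f (z + h) - ∑ i ∈ Finset.range (n + 1), iteratedDeriv i (deriv f) z / (Nat.factorial i : ℝ) * h ^ i)
        h := by
      intro h
      have h1 : HasDerivAt (fun h : ℝ => f (z + h)) (deriv f (z + h)) h := by
        have h0 : HasDerivAt f (deriv f (z + h)) (z + id h) := by
          simpa using ((hf.differentiable (by simp)) (z + h)).hasDerivAt
        simpa [Function.comp_def] using h0.comp h ((hasDerivAt_id h).const_add z)
      have h2 : HasDerivAt
          (fun h : ℝ => ∑ i ∈ Finset.range (n + 1 + 1), iteratedDeriv i f z / (Nat.factorial i : ℝ) * h ^ i)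
          (∑ i ∈ Finset.range (n + 1 + 1), iteratedDeriv i f z / (Nat.factorial i : ℝ) * (i * h ^ (i - 1))) h :=
        HasDerivAt.fun_sum fun i _ => (hasDerivAt_pow i h).const_mul _
      have h3 : (∑ i ∈ Finset.range (n + 1 + 1), iteratedDeriv i f z / (Nat.factorial i : ℝ) * (i * h ^ (i - 1)))
          = ∑ i ∈ Finset.range (n + 1), iteratedDeriv i (deriv f) z / (Nat.factorial i : ℝ) * h ^ i := by
        rw [Finset.sum_range_succ']
        simp only [Nat.cast_zero, zero_mul, mul_zero, add_zero]
        refine Finset.sum_congr rfl fun i _ => ?_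
        have hid : iteratedDeriv (i + 1) f z = iteratedDeriv i (deriv f) z := by
          rw [iteratedDeriv_succ']
        rw [hid, Nat.add_sub_cancel, Nat.factorial_succ]
        have h0 : ((Nat.factorial i : ℝ)) ≠ 0 := Nat.cast_ne_zero.mpr (Nat.factorial_ne_zero i)
        have h1 : ((i : ℝ) + 1) ≠ 0 := by positivity
        push_cast
        field_simp
      exact h3 ▸ (h1.sub h2)
    have hR0 : f (z + 0) - ∑ i ∈ Finset.range (n + 1 + 1), iteratedDeriv i f z / (Nat.factorial i : ℝ) * (0:ℝ) ^ i
        = 0 := by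
      rw [Finset.sum_range_succ']
      simp [iteratedDeriv_zero]
    rw [isBigO_iff]
    refine ⟨C, ?_⟩
    filter_upwards [Metric.ball_mem_nhds (0:ℝ) hε] with h hh
    rw [Metric.mem_ball, Real.dist_eq, sub_zero] at hh
    have bound : ∀ x ∈ Metric.closedBall (0:ℝ) |h|,
        ‖deriv f (z + x) - ∑ i ∈ Finset.range (n + 1), iteratedDeriv i (deriv f) z / (Nat.factorial i : ℝ) * x ^ i‖
          ≤ C * |h| ^ (n + 1) := by
      intro x hx
      rw [Metric.mem_closedBall, Real.dist_eq, sub_zero] at hx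
      have hxε : dist x (0:ℝ) < ε := by rw [Real.dist_eq, sub_zero]; exact lt_of_le_of_lt hx hh
      calc ‖_‖ ≤ C * ‖x ^ (n + 1)‖ := hB hxε
        _ = C * |x| ^ (n + 1) := by rw [Real.norm_eq_abs, abs_pow]
        _ ≤ C * |h| ^ (n + 1) := by gcongr
    have key := Convex.norm_image_sub_le_of_norm_hasDerivWithin_le
      (fun x _ => (hR' x).hasDerivWithinAt) bound (convex_closedBall _ _)
      (Metric.mem_closedBall_self (abs_nonneg h))
      (by rw [Metric.mem_closedBall, Real.dist_eq, sub_zero])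
    rw [hR0, sub_zero, sub_zero] at key
    calc ‖f (z + h) - ∑ i ∈ Finset.range (n + 1 + 1), iteratedDeriv i f z / (Nat.factorial i : ℝ) * h ^ i‖
        ≤ C * |h| ^ (n + 1) * ‖h‖ := key
      _ = C * ‖h ^ (n + 1 + 1)‖ := by
          rw [Real.norm_eq_abs, Real.norm_eq_abs, abs_pow]
          ring

/-- At a first-order critical point (`f'(z) = 0`, `f''(z) ≠ 0`), the MWENO-P scheme has
`η/β̃_k² = O(Δx⁴)` and its nonlinear weights satisfy the sufficient condition
`ω_k - d_k = O(Δx³)` for fifth-order convergence, as `Δx → 0⁺`. -/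
theorem mwenoP_weights_first_order_critical (f : ℝ → ℝ) (hf : ContDiff ℝ (⊤ : ℕ∞) f) (z : ℝ)
    (ξ δ : ℝ) (hξ : 0 < ξ) (hδ : δ ∈ Set.Ioo (0 : ℝ) 1)
    (hf' : deriv f z = 0) (hf'' : iteratedDeriv 2 f z ≠ 0) :
    ∀ k : Fin 3,
      ((fun Δx : ℝ => etaMP f z Δx / (betaTilde f z ξ δ k Δx) ^ 2)
        =O[𝓝[>] (0 : ℝ)] fun Δx => Δx ^ 4) ∧
      ((fun Δx : ℝ => omegaMP f z ξ δ k Δx - dIdeal k)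
        =O[𝓝[>] (0 : ℝ)] fun Δx => Δx ^ 3) := by
  have hf8 : ContDiff ℝ ∞ f := hf.of_le (by simp)
  set R2 : ℝ → ℝ := fun h => f (z + h) -
    ∑ i ∈ Finset.range 3, iteratedDeriv i f z / (Nat.factorial i : ℝ) * h ^ i with hR2def
  set R3 : ℝ → ℝ := fun h => f (z + h) -
    ∑ i ∈ Finset.range 4, iteratedDeriv i f z / (Nat.factorial i : ℝ) * h ^ i with hR3def
  have hT2 : R2 =O[𝓝 (0:ℝ)] fun h => h ^ 3 := by
    simpa [hR2def] using taylorRem_isBigO z 2 f hf8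
  have hT3 : R3 =O[𝓝 (0:ℝ)] fun h => h ^ 4 := by
    simpa [hR3def] using taylorRem_isBigO z 3 f hf8
  have hfe2 : ∀ h : ℝ, f (z + h) =
      (∑ i ∈ Finset.range 3, iteratedDeriv i f z / (Nat.factorial i : ℝ) * h ^ i) + R2 h := by
    intro h; simp only [hR2def]; ring
  have hfe3 : ∀ h : ℝ, f (z + h) =
      (∑ i ∈ Finset.range 4, iteratedDeriv i f z / (Nat.factorial i : ℝ) * h ^ i) + R3 h := by
    intro h; simp only [hR3def]; ring
  have harg : ∀ (m : ℤ) (t x : ℝ), (2 * (m : ℝ) - 1) / 2 = t →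
      gridVal f z x m = f (z + t * x) := by
    intro m t x ht
    rw [gridVal, ← ht]
    congr 1
    ring
  have hcomp2 : ∀ t : ℝ, (fun x : ℝ => R2 (t * x)) =O[𝓝[>] (0:ℝ)] fun x => x ^ 3 := by
    intro t
    have htt : Filter.Tendsto (fun x : ℝ => t * x) (𝓝[>] (0:ℝ)) (𝓝 (0:ℝ)) :=
      ((continuous_const.mul continuous_id).tendsto' 0 0 (by simp)).mono_left nhdsWithin_le_nhds
    have h1 := hT2.comp_tendsto htt
    have h2 : (fun x : ℝ => (t * x) ^ 3) =O[𝓝[>] (0:ℝ)] fun x => x ^ 3 := by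
      have he : (fun x : ℝ => (t * x) ^ 3) = fun x : ℝ => t ^ 3 * x ^ 3 := by
        funext x; ring
      rw [he]
      exact (isBigO_refl (fun x : ℝ => x ^ 3) _).const_mul_left _
    exact h1.trans h2
  have hcomp3 : ∀ t : ℝ, (fun x : ℝ => R3 (t * x)) =O[𝓝[>] (0:ℝ)] fun x => x ^ 4 := by
    intro t
    have htt : Filter.Tendsto (fun x : ℝ => t * x) (𝓝[>] (0:ℝ)) (𝓝 (0:ℝ)) :=
      ((continuous_const.mul continuous_id).tendsto' 0 0 (by simp)).mono_left nhdsWithin_le_nhds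
    have h1 := hT3.comp_tendsto htt
    have h2 : (fun x : ℝ => (t * x) ^ 4) =O[𝓝[>] (0:ℝ)] fun x => x ^ 4 := by
      have he : (fun x : ℝ => (t * x) ^ 4) = fun x : ℝ => t ^ 4 * x ^ 4 := by
        funext x; ring
      rw [he]
      exact (isBigO_refl (fun x : ℝ => x ^ 4) _).const_mul_left _
    exact h1.trans h2
  -- pointwise identities
  have hL20e : ∀ x : ℝ, L20 f z x - iteratedDeriv 2 f z * x ^ 2
      = R2 (-(5/2) * x) - 2 * R2 (-(3/2) * x) + R2 (-(1/2) * x) := by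
    intro x
    simp only [L20]
    rw [harg (-2) (-(5/2)) x (by norm_num), harg (-1) (-(3/2)) x (by norm_num),
      harg 0 (-(1/2)) x (by norm_num)]
    simp only [hfe2]
    simp only [Finset.sum_range_succ, Finset.sum_range_zero]
    norm_num [Nat.factorial]
    ring
  have hL21e : ∀ x : ℝ, L21 f z x - iteratedDeriv 2 f z * x ^ 2
      = R2 (-(3/2) * x) - 2 * R2 (-(1/2) * x) + R2 ((1/2) * x) := by
    intro x
    simp only [L21]
    rw [harg (-1) (-(3/2)) x (by norm_num), harg 0 (-(1/2)) x (by norm_num),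
      harg 1 ((1/2)) x (by norm_num)]
    simp only [hfe2]
    simp only [Finset.sum_range_succ, Finset.sum_range_zero]
    norm_num [Nat.factorial]
    ring
  have hL22e : ∀ x : ℝ, L22 f z x - iteratedDeriv 2 f z * x ^ 2
      = R2 (-(1/2) * x) - 2 * R2 ((1/2) * x) + R2 ((3/2) * x) := by
    intro x
    simp only [L22]
    rw [harg 0 (-(1/2)) x (by norm_num), harg 1 ((1/2)) x (by norm_num),
      harg 2 ((3/2)) x (by norm_num)]
    simp only [hfe2]
    simp only [Finset.sum_range_succ, Finset.sum_range_zero]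
    norm_num [Nat.factorial]
    ring
  have hQe : ∀ x : ℝ, L20 f z x + L22 f z x - 2 * L21 f z x
      = R3 (-(5/2) * x) - 4 * R3 (-(3/2) * x) + 6 * R3 (-(1/2) * x)
        - 4 * R3 ((1/2) * x) + R3 ((3/2) * x) := by
    intro x
    simp only [L20, L21, L22]
    rw [harg (-2) (-(5/2)) x (by norm_num), harg (-1) (-(3/2)) x (by norm_num),
      harg 0 (-(1/2)) x (by norm_num), harg 1 ((1/2)) x (by norm_num),
      harg 2 ((3/2)) x (by norm_num)]
    simp only [hfe3]
    simp only [Finset.sum_range_succ, Finset.sum_range_zero]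
    norm_num [Nat.factorial]
    ring
  -- asymptotics of the second differences
  have hL20O : (fun x : ℝ => L20 f z x - iteratedDeriv 2 f z * x ^ 2)
      =O[𝓝[>] (0:ℝ)] fun x => x ^ 3 := by
    have h := ((hcomp2 (-(5/2))).sub ((hcomp2 (-(3/2))).const_mul_left 2)).add (hcomp2 (-(1/2)))
    exact h.congr (fun x => (hL20e x).symm) fun x => rfl
  have hL21O : (fun x : ℝ => L21 f z x - iteratedDeriv 2 f z * x ^ 2)
      =O[𝓝[>] (0:ℝ)] fun x => x ^ 3 := by
    have h := ((hcomp2 (-(3/2))).sub ((hcomp2 (-(1/2))).const_mul_left 2)).add (hcomp2 ((1/2)))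
    exact h.congr (fun x => (hL21e x).symm) fun x => rfl
  have hL22O : (fun x : ℝ => L22 f z x - iteratedDeriv 2 f z * x ^ 2)
      =O[𝓝[>] (0:ℝ)] fun x => x ^ 3 := by
    have h := ((hcomp2 (-(1/2))).sub ((hcomp2 ((1/2))).const_mul_left 2)).add (hcomp2 ((3/2)))
    exact h.congr (fun x => (hL22e x).symm) fun x => rfl
  have hQO : (fun x : ℝ => L20 f z x + L22 f z x - 2 * L21 f z x)
      =O[𝓝[>] (0:ℝ)] fun x => x ^ 4 := by
    have h := ((((hcomp3 (-(5/2))).sub ((hcomp3 (-(3/2))).const_mul_left 4)).add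
      ((hcomp3 (-(1/2))).const_mul_left 6)).sub ((hcomp3 ((1/2))).const_mul_left 4)).add
      (hcomp3 ((3/2)))
    exact h.congr (fun x => (hQe x).symm) fun x => rfl
  have hηO : (fun x : ℝ => etaMP f z x) =O[𝓝[>] (0:ℝ)] fun x => x ^ 8 := by
    have h := hQO.pow 2
    exact h.congr (fun x => rfl) (fun x => by ring)
  -- lower bound for second differences
  have hlow : ∀ g : ℝ → ℝ,
      ((fun x : ℝ => g x - iteratedDeriv 2 f z * x ^ 2) =O[𝓝[>] (0:ℝ)] fun x => x ^ 3) →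
      ∀ᶠ x in 𝓝[>] (0:ℝ), |iteratedDeriv 2 f z| / 2 * x ^ 2 ≤ |g x| := by
    intro g hg
    obtain ⟨C, hC0, hCb⟩ := hg.exists_pos
    have hb := hCb.bound
    have hab : (0:ℝ) < |iteratedDeriv 2 f z| := abs_pos.mpr hf''
    have hsmall : Set.Ioo (0:ℝ) (|iteratedDeriv 2 f z| / (2 * C)) ∈ 𝓝[>] (0:ℝ) :=
      Ioo_mem_nhdsGT_of_mem (by constructor <;> [norm_num; positivity])
    filter_upwards [hb, hsmall] with x h1 h2
    obtain ⟨hx0, hxs⟩ := h2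
    rw [Real.norm_eq_abs, Real.norm_eq_abs] at h1
    have e1 : |iteratedDeriv 2 f z * x ^ 2| = |iteratedDeriv 2 f z| * x ^ 2 := by
      rw [abs_mul, abs_of_nonneg (by positivity : (0:ℝ) ≤ x ^ 2)]
    have e2 : |x ^ 3| = x * x ^ 2 := by
      rw [abs_of_nonneg (by positivity : (0:ℝ) ≤ x ^ 3)]; ring
    have e3 := abs_sub_abs_le_abs_sub (iteratedDeriv 2 f z * x ^ 2) (iteratedDeriv 2 f z * x ^ 2 - g x)
    have e4 : iteratedDeriv 2 f z * x ^ 2 - (iteratedDeriv 2 f z * x ^ 2 - g x) = g x := by ring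
    have e5 : |iteratedDeriv 2 f z * x ^ 2 - g x| = |g x - iteratedDeriv 2 f z * x ^ 2| := abs_sub_comm _ _
    rw [e4, e5] at e3
    have hCx : C * x < |iteratedDeriv 2 f z| / 2 := by
      rw [lt_div_iff₀ (by positivity : (0:ℝ) < 2 * C)] at hxs
      nlinarith
    nlinarith [e1, e2, h1, e3, sq_nonneg x, hx0]
  -- lower bound for betaTilde
  have hc2pos : (0:ℝ) < |iteratedDeriv 2 f z| / 2 * (1 - δ) := by
    have := hδ.2
    have hab : (0:ℝ) < |iteratedDeriv 2 f z| := abs_pos.mpr hf''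
    nlinarith
  have hBlow : ∀ k : Fin 3, ∀ᶠ x in 𝓝[>] (0:ℝ),
      |iteratedDeriv 2 f z| / 2 * (1 - δ) * x ^ 2 ≤ betaTilde f z ξ δ k x := by
    intro k
    filter_upwards [hlow _ hL20O, hlow _ hL21O, hlow _ hL22O] with x h0 h1 h2
    have hδ0 := hδ.1
    have hδ1 := hδ.2
    have hn0 : (0:ℝ) ≤ ξ * |L10 f z x| := by positivity
    have hn1 : (0:ℝ) ≤ ξ * |L11 f z x| := by positivity
    have hx2 : (0:ℝ) ≤ x ^ 2 := sq_nonneg x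
    have hab : (0:ℝ) ≤ |iteratedDeriv 2 f z| := abs_nonneg _
    fin_cases k <;>
      simp (config := { decide := true }) only [betaTilde, betaNS, if_true, if_false] <;>
      nlinarith [h0, h1, h2, hn0, hn1, abs_nonneg (L20 f z x), abs_nonneg (L21 f z x),
        abs_nonneg (L22 f z x), mul_nonneg (mul_nonneg hab hx2) hδ0.le,
        mul_nonneg hδ0.le (by positivity : (0:ℝ) ≤ ξ * |L11 f z x| + |L21 f z x|),
        mul_le_mul_of_nonneg_left h2 (by linarith : (0:ℝ) ≤ 1 - δ),
        mul_nonneg (by linarith : (0:ℝ) ≤ 1 - δ) hn1]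
  have hx4 : ∀ k : Fin 3, (fun x : ℝ => x ^ 4) =O[𝓝[>] (0:ℝ)]
      fun x => (betaTilde f z ξ δ k x) ^ 2 := by
    intro k
    rw [isBigO_iff]
    refine ⟨(1 / (|iteratedDeriv 2 f z| / 2 * (1 - δ))) ^ 2, ?_⟩
    filter_upwards [hBlow k] with x hbx
    have hβ0 : (0:ℝ) ≤ betaTilde f z ξ δ k x :=
      le_trans (by positivity) hbx
    have hstep : x ^ 2 ≤ betaTilde f z ξ δ k x / (|iteratedDeriv 2 f z| / 2 * (1 - δ)) := by
      rw [le_div_iff₀ hc2pos]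
      nlinarith [hbx]
    calc ‖x ^ 4‖ = (x ^ 2) ^ 2 := by
          rw [Real.norm_eq_abs, abs_of_nonneg (by positivity : (0:ℝ) ≤ x ^ 4)]; ring
      _ ≤ (betaTilde f z ξ δ k x / (|iteratedDeriv 2 f z| / 2 * (1 - δ))) ^ 2 :=
          pow_le_pow_left₀ (sq_nonneg x) hstep 2
      _ = (1 / (|iteratedDeriv 2 f z| / 2 * (1 - δ))) ^ 2 * ‖(betaTilde f z ξ δ k x) ^ 2‖ := by
          rw [Real.norm_eq_abs, abs_of_nonneg (by positivity : (0:ℝ) ≤ (betaTilde f z ξ δ k x) ^ 2)]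
          ring
  have hr : ∀ k : Fin 3, (fun x : ℝ => etaMP f z x / betaTilde f z ξ δ k x ^ 2)
      =O[𝓝[>] (0:ℝ)] fun x => x ^ 4 := by
    intro k
    have hinv : (fun x : ℝ => ((betaTilde f z ξ δ k x) ^ 2)⁻¹)
        =O[𝓝[>] (0:ℝ)] fun x : ℝ => ((x : ℝ) ^ 4)⁻¹ := by
      refine (hx4 k).inv_rev ?_
      filter_upwards [self_mem_nhdsWithin] with x hx h4
      have hx0 : (0:ℝ) < x := hx
      exact absurd h4 (by positivity)
    have hmul := hηO.mul hinv
    have hco : (fun x : ℝ => etaMP f z x / betaTilde f z ξ δ k x ^ 2)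
        =O[𝓝[>] (0:ℝ)] fun x : ℝ => x ^ 8 * (x ^ 4)⁻¹ :=
      hmul.congr (fun x => (div_eq_mul_inv _ _).symm) fun x => rfl
    refine hco.congr' Filter.EventuallyEq.rfl ?_
    filter_upwards [self_mem_nhdsWithin] with x hx
    have hx0 : (0:ℝ) < x := hx
    have hxne : x ≠ 0 := ne_of_gt hx0
    field_simp
  intro k
  refine ⟨hr k, ?_⟩
  -- sum of alphas
  have hrs : (fun x : ℝ => (alphaMP f z ξ δ 0 x + alphaMP f z ξ δ 1 x + alphaMP f z ξ δ 2 x) - 1)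
      =O[𝓝[>] (0:ℝ)] fun x => x ^ 4 := by
    have h := (((hr 0).const_mul_left (dIdeal 0)).add ((hr 1).const_mul_left (dIdeal 1))).add
      ((hr 2).const_mul_left (dIdeal 2))
    refine h.congr (fun x => ?_) fun x => rfl
    simp only [alphaMP, dIdeal, Matrix.cons_val_zero, Matrix.cons_val_one, Matrix.head_cons,
      Matrix.cons_val_two, Matrix.tail_cons]
    ring
  have h4to0 : Filter.Tendsto (fun x : ℝ => x ^ 4) (𝓝[>] (0:ℝ)) (𝓝 (0:ℝ)) :=
    ((continuous_pow 4).tendsto' 0 0 (by norm_num)).mono_left nhdsWithin_le_nhds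
  have hst : Filter.Tendsto
      (fun x : ℝ => alphaMP f z ξ δ 0 x + alphaMP f z ξ δ 1 x + alphaMP f z ξ δ 2 x)
      (𝓝[>] (0:ℝ)) (𝓝 1) := by
    have h1 := hrs.trans_tendsto h4to0
    have h2 := h1.add (tendsto_const_nhds (x := (1:ℝ)) (f := 𝓝[>] (0:ℝ)))
    simpa using h2
  have hev : ∀ᶠ x in 𝓝[>] (0:ℝ),
      1/2 < alphaMP f z ξ δ 0 x + alphaMP f z ξ δ 1 x + alphaMP f z ξ δ 2 x :=
    hst.eventually (eventually_gt_nhds (by norm_num))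
  have hfin : (fun x : ℝ => omegaMP f z ξ δ k x - dIdeal k) =O[𝓝[>] (0:ℝ)]
      fun x : ℝ => (etaMP f z x / betaTilde f z ξ δ k x ^ 2)
        - ((alphaMP f z ξ δ 0 x + alphaMP f z ξ δ 1 x + alphaMP f z ξ δ 2 x) - 1) := by
    rw [isBigO_iff]
    refine ⟨2, ?_⟩
    filter_upwards [hev] with x hx
    have hS : (0:ℝ) < alphaMP f z ξ δ 0 x + alphaMP f z ξ δ 1 x + alphaMP f z ξ δ 2 x := by
      linarith
    have hdk0 : 0 < dIdeal k := by fin_cases k <;> norm_num [dIdeal]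
    have hdk1 : dIdeal k ≤ 1 := by fin_cases k <;> norm_num [dIdeal]
    have hαk : alphaMP f z ξ δ k x
        = dIdeal k * (1 + etaMP f z x / betaTilde f z ξ δ k x ^ 2) := rfl
    have hωeq : omegaMP f z ξ δ k x - dIdeal k
        = dIdeal k * ((etaMP f z x / betaTilde f z ξ δ k x ^ 2)
            - ((alphaMP f z ξ δ 0 x + alphaMP f z ξ δ 1 x + alphaMP f z ξ δ 2 x) - 1))
          / (alphaMP f z ξ δ 0 x + alphaMP f z ξ δ 1 x + alphaMP f z ξ δ 2 x) := by
      rw [omegaMP, hαk]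
      field_simp
      ring
    rw [hωeq, Real.norm_eq_abs, Real.norm_eq_abs, abs_div, abs_mul, abs_of_pos hS,
      abs_of_pos hdk0]
    rw [div_le_iff₀ hS]
    nlinarith [abs_nonneg ((etaMP f z x / betaTilde f z ξ δ k x ^ 2)
      - ((alphaMP f z ξ δ 0 x + alphaMP f z ξ δ 1 x + alphaMP f z ξ δ 2 x) - 1))]
  have h43 : (fun x : ℝ => x ^ 4) =O[𝓝[>] (0:ℝ)] fun x : ℝ => x ^ 3 := by
    rw [isBigO_iff]
    refine ⟨1, ?_⟩
    filter_upwards [Ioo_mem_nhdsGT_of_mem (by norm_num : (0:ℝ) ∈ Set.Ico (0:ℝ) 1)] with x hx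
    rw [Real.norm_eq_abs, Real.norm_eq_abs, one_mul, abs_pow, abs_pow]
    have h1 : |x| ≤ 1 := by rw [abs_of_pos hx.1]; exact le_of_lt hx.2
    calc |x| ^ 4 = |x| * |x| ^ 3 := by ring
      _ ≤ 1 * |x| ^ 3 := mul_le_mul_of_nonneg_right h1 (pow_nonneg (abs_nonneg x) 3)
      _ = |x| ^ 3 := one_mul _
  exact hfin.trans (((hr k).sub hrs).trans h43)
end

section
/- Let f : ℝ → ℝ be infinitely differentiable, z ∈ ℝ, ξ > 0 and δ ∈ (0,1), and assume f'(z) = 0, f''(z) = 0 and f'''(z) ≠ 0. For Δx > 0 set f_m = f(z + (2m−1)Δx/2) for m = −2,…,2, define L_{1,0} = f₋₂ − 3f₋₁ + 2f₀, L_{1,1} = L_{1,2} = −f₀ + f₁, L_{2,0} = f₋₂ − 2f₋₁ + f₀, L_{2,1} = f₋₁ − 2f₀ + f₁, L_{2,2} = f₀ − 2f₁ + f₂, the smoothness indicators β_k = ξ·|L_{1,k}| + |L_{2,k}|, the adjusted indicators β̃₀ = β₀, β̃₁ = (1+δ)β₁, β̃₂ = (1−δ)β₂, the global indicator η = (L_{2,0}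 + L_{2,2} − 2L_{2,1})², and with d₀ = 1/10, d₁ = 6/10, d₂ = 3/10 the MWENO-P weights α_k(Δx) = d_k·(1 + η/β̃_k²) and ω_k(Δx) = α_k(Δx)/(α₀(Δx) + α₁(Δx) + α₂(Δx)). Then η(Δx)/β̃_k(Δx)² = O(Δx²) and ω_k(Δx) − d_k = O(Δx²) as Δx → 0⁺, for each k ∈ {0,1,2}. -/
open Filter Asymptotics Topology

section Helpers
open Set

lemma my_iteratedDeriv_add {f g : ℝ → ℝ} (n : ℕ) (x : ℝ)
    (hf : ContDiff ℝ (⊤ : ℕ∞) f) (hg : ContDiff ℝ (⊤ : ℕ∞) g) :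
    iteratedDeriv n (fun y => f y + g y) x = iteratedDeriv n f x + iteratedDeriv n g x := by
  simp only [iteratedDeriv_eq_iteratedFDeriv]
  rw [show (fun y => f y + g y) = f + g from rfl,
    iteratedFDeriv_add_apply (hf.of_le (by exact_mod_cast le_top)).contDiffAt (hg.of_le (by exact_mod_cast le_top)).contDiffAt]
  simp

lemma peano (n : ℕ) : ∀ (g : ℝ → ℝ), ContDiff ℝ (⊤ : ℕ∞) g →
    (∀ i ≤ n, iteratedDeriv i g 0 = 0) →
    g =O[𝓝[>] (0:ℝ)] fun h => h ^ (n + 1) := by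
  induction n with
  | zero =>
    intro g hg h0
    have h00 : g 0 = 0 := by simpa using h0 0 le_rfl
    have := ((hg.differentiable (by simp)).differentiableAt (x := 0)).isBigO_sub
    simp only [h00, sub_zero] at this
    simpa [pow_one] using this.mono nhdsWithin_le_nhds
  | succ n IH =>
    intro g hg h0
    have hg' : ContDiff ℝ (⊤ : ℕ∞) (deriv g) := (contDiff_infty_iff_deriv.mp hg).2
    have hd : ∀ i ≤ n, iteratedDeriv i (deriv g) 0 = 0 := by
      intro i hi
      rw [← iteratedDeriv_succ']
      exact h0 (i + 1) (by omega)
    obtain ⟨C, hC0, hC⟩ := (IH (deriv g) hg' hd).exists_nonneg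
    rw [isBigOWith_iff] at hC
    rw [eventually_nhdsWithin_iff, Metric.eventually_nhds_iff] at hC
    obtain ⟨ε, hε, hCb⟩ := hC
    rw [isBigO_iff]
    refine ⟨C, ?_⟩
    filter_upwards [Ioo_mem_nhdsGT_of_mem (⟨le_rfl, hε⟩ : (0:ℝ) ∈ Ico 0 ε)] with x hx
    obtain ⟨hx0, hxε⟩ := hx
    have hder0 : deriv g 0 = 0 := by
      have := h0 1 (by omega); rwa [iteratedDeriv_one] at this
    have hbound : ∀ t ∈ Ico (0:ℝ) x, ‖deriv g t‖ ≤ C * x ^ (n + 1) := by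
      intro t ht
      rcases eq_or_lt_of_le ht.1 with rfl | ht0
      · simp [hder0]; positivity
      · have htd : dist t 0 < ε := by
          rw [Real.dist_eq, sub_zero, abs_of_pos ht0]; linarith [ht.2]
        have hb := hCb htd (mem_Ioi.mpr ht0)
        calc ‖deriv g t‖ ≤ C * ‖t ^ (n+1)‖ := hb
          _ ≤ C * x ^ (n+1) := by
              rw [Real.norm_eq_abs, abs_of_pos (by positivity)]
              gcongr
              exact ht.2.le
    have hdiff : ∀ t ∈ Icc (0:ℝ) x, HasDerivWithinAt g (deriv g t) (Icc 0 x) t :=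
      fun t _ => ((hg.differentiable (by simp)).differentiableAt.hasDerivAt).hasDerivWithinAt
    have key := norm_image_sub_le_of_norm_deriv_le_segment' hdiff hbound x
      (right_mem_Icc.mpr hx0.le)
    have hg0 : g 0 = 0 := by simpa using h0 0 (by omega)
    rw [hg0, sub_zero, sub_zero] at key
    calc ‖g x‖ ≤ C * x ^ (n+1) * x := key
      _ = C * ‖x ^ (n+1+1)‖ := by
          rw [Real.norm_eq_abs, abs_of_pos (by positivity)]; ring

lemma q_derivs (K b : ℝ) :
    iteratedDeriv 0 (fun h : ℝ => K + b * h ^ 3) 0 = K ∧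
    iteratedDeriv 1 (fun h : ℝ => K + b * h ^ 3) 0 = 0 ∧
    iteratedDeriv 2 (fun h : ℝ => K + b * h ^ 3) 0 = 0 ∧
    iteratedDeriv 3 (fun h : ℝ => K + b * h ^ 3) 0 = 6 * b := by
  have e1 : deriv (fun h : ℝ => K + b * h ^ 3) = fun h => 3 * b * h ^ 2 := by
    funext h
    have := ((hasDerivAt_pow 3 h).const_mul b).const_add K
    simpa using this.deriv.trans (by ring)
  have e2 : deriv (fun h : ℝ => 3 * b * h ^ 2) = fun h => 6 * b * h := by
    funext h
    have := (hasDerivAt_pow 2 h).const_mul (3 * b)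
    simpa using this.deriv.trans (by ring)
  have e3 : deriv (fun h : ℝ => 6 * b * h) = fun h => 6 * b := by
    funext h
    have := (hasDerivAt_id h).const_mul (6 * b)
    simpa using this.deriv
  refine ⟨by simp, ?_, ?_, ?_⟩
  · rw [iteratedDeriv_one, e1]; simp
  · rw [show (2:ℕ) = 1 + 1 from rfl, iteratedDeriv_succ', e1, iteratedDeriv_one, e2]; simp
  · rw [show (3:ℕ) = 1 + 1 + 1 from rfl, iteratedDeriv_succ', e1, iteratedDeriv_succ', e2,
      iteratedDeriv_one, e3]

lemma taylor3 (f : ℝ → ℝ) (hf : ContDiff ℝ (⊤ : ℕ∞) f) (z a : ℝ)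
    (h1 : deriv f z = 0) (h2 : iteratedDeriv 2 f z = 0) :
    (fun h : ℝ => f (z + a * h) - (f z + a ^ 3 * iteratedDeriv 3 f z / 6 * h ^ 3))
      =O[𝓝[>] (0:ℝ)] fun h => h ^ 4 := by
  set b : ℝ := a ^ 3 * iteratedDeriv 3 f z / 6 with hb
  have hshiftC : ContDiff ℝ (⊤ : ℕ∞) (fun t : ℝ => f (z + t)) :=
    hf.comp (contDiff_const.add contDiff_id)
  have hf1 : ∀ n : ℕ, iteratedDeriv n (fun x : ℝ => f (z + a * x)) 0
      = a ^ n * iteratedDeriv n f z := by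
    intro n
    have := iteratedDeriv_comp_const_mul (f := fun t : ℝ => f (z + t)) (n := n)
      (hshiftC.of_le (by exact_mod_cast le_top)) a
    have := congrFun this 0
    rw [iteratedDeriv_comp_const_add] at this
    simpa using this
  have hC1 : ContDiff ℝ (⊤ : ℕ∞) (fun x : ℝ => f (z + a * x)) :=
    hf.comp (contDiff_const.add (contDiff_const.mul contDiff_id))
  have hC2 : ContDiff ℝ (⊤ : ℕ∞) (fun h : ℝ => -(f z + b * h ^ 3)) :=
    ((contDiff_const.add (contDiff_const.mul (contDiff_id.pow 3)))).neg
  obtain ⟨q0, q1, q2, q3⟩ := q_derivs (f z) b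
  have key : ∀ i ≤ 3, iteratedDeriv i
      (fun h : ℝ => f (z + a * h) + -(f z + b * h ^ 3)) 0 = 0 := by
    intro i hi
    rw [my_iteratedDeriv_add i 0 hC1 hC2]
    have hneg : ∀ j : ℕ, iteratedDeriv j (fun h : ℝ => -(f z + b * h ^ 3)) 0
        = -iteratedDeriv j (fun h : ℝ => f z + b * h ^ 3) 0 := fun j =>
      iteratedDeriv_neg j _ 0
    interval_cases i
    · rw [hf1, hneg, q0]; simp
    · rw [hf1, hneg, q1, iteratedDeriv_one, h1]; simp
    · rw [hf1, hneg, q2, h2]; simp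
    · rw [hf1, hneg, q3, hb]; ring
  have := peano 3 _ (hC1.add hC2) key
  simpa [sub_eq_add_neg] using this

lemma eta_div_beta (L2 B η : ℝ → ℝ) (c2 : ℝ) (hc2 : c2 ≠ 0)
    (hL2 : (fun h : ℝ => L2 h - c2 * h ^ 3) =O[𝓝[>] (0:ℝ)] fun h => h ^ 4)
    (K : ℝ) (hB : ∀ h, |L2 h| ≤ K * |B h|)
    (hη : η =O[𝓝[>] (0:ℝ)] fun h => h ^ 8) (hηpos : ∀ h, 0 ≤ η h) :
    (fun h => η h / (B h) ^ 2) =O[𝓝[>] (0:ℝ)] fun h => h ^ 2 := by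
  have hid : (fun h : ℝ => h) =o[𝓝[>] (0:ℝ)] fun _ => (1:ℝ) :=
    (isLittleO_one_iff _).mpr (tendsto_id.mono_left nhdsWithin_le_nhds)
  have h43 : (fun h : ℝ => h ^ 4) =o[𝓝[>] (0:ℝ)] fun h => h ^ 3 := by
    have := hid.mul_isBigO (isBigO_refl (fun h : ℝ => h ^ 3) (𝓝[>] (0:ℝ)))
    simpa [pow_succ, mul_comm] using this
  have hlo : (fun h : ℝ => L2 h - c2 * h ^ 3) =o[𝓝[>] (0:ℝ)] fun h => c2 * h ^ 3 := by
    have := hL2.trans_isLittleO h43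
    rwa [isLittleO_const_mul_right_iff hc2]
  have hequiv : L2 ~[𝓝[>] (0:ℝ)] fun h => c2 * h ^ 3 := hlo
  have h3L : (fun h : ℝ => h ^ 3) =O[𝓝[>] (0:ℝ)] L2 :=
    (isBigO_self_const_mul hc2 (fun h : ℝ => h ^ 3) _).trans hequiv.symm.isBigO
  have hLB : L2 =O[𝓝[>] (0:ℝ)] B :=
    Asymptotics.isBigO_of_le' (c := K) _ (fun x => by simpa [Real.norm_eq_abs] using hB x)
  have h3B := h3L.trans hLB
  have hη2 : η =O[𝓝[>] (0:ℝ)] fun h => h ^ 2 * B h ^ 2 := by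
    refine hη.trans ?_
    have := (isBigO_refl (fun h : ℝ => h ^ 2) (𝓝[>] (0:ℝ))).mul (h3B.pow 2)
    simpa [← pow_mul, ← pow_add] using this
  obtain ⟨C, hC0, hC⟩ := hη2.exists_nonneg
  rw [isBigO_iff]
  refine ⟨C, ?_⟩
  filter_upwards [hC.bound] with x hx
  by_cases hBx : B x = 0
  · simp only [hBx, ne_eq, OfNat.ofNat_ne_zero, not_false_eq_true, zero_pow, div_zero,
      norm_zero]
    positivity
  · have hB2 : 0 < B x ^ 2 := by positivity
    rw [Real.norm_eq_abs, Real.norm_eq_abs, abs_of_nonneg (div_nonneg (hηpos x) hB2.le),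
      abs_of_nonneg (sq_nonneg x), div_le_iff₀ hB2]
    have hx' : η x ≤ C * (x ^ 2 * B x ^ 2) := by
      have : ‖η x‖ = η x := abs_of_nonneg (hηpos x)
      rw [this] at hx
      refine hx.trans ?_
      rw [Real.norm_eq_abs, abs_mul, abs_of_nonneg (sq_nonneg x),
        abs_of_nonneg (sq_nonneg (B x))]
    linarith [hx']


end Helpers

lemma gridVal_eq (f : ℝ → ℝ) (z h : ℝ) (m : ℤ) (a : ℝ) (ha : 2 * (m : ℝ) - 1 = 2 * a) :
    gridVal f z h m = f (z + a * h) := by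
  unfold gridVal
  rw [show (2 * (m:ℝ) - 1) * h / 2 = ((2 * (m:ℝ) - 1) / 2) * h by ring,
    show (2 * (m:ℝ) - 1) / 2 = a by rw [ha]; ring]


/-- At a second-order critical point (`f'(z) = f''(z) = 0`, `f'''(z) ≠ 0`), the MWENO-P
scheme has `η/β̃_k² = O(Δx²)` and its nonlinear weights satisfy
`ω_k - d_k = O(Δx²)`, as `Δx → 0⁺`. -/
theorem mwenoP_weights_second_order_critical (f : ℝ → ℝ) (hf : ContDiff ℝ (⊤ : ℕ∞) f) (z : ℝ)
    (ξ δ : ℝ) (hξ : 0 < ξ) (hδ : δ ∈ Set.Ioo (0 : ℝ) 1)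
    (hf' : deriv f z = 0) (hf'' : iteratedDeriv 2 f z = 0)
    (hf''' : iteratedDeriv 3 f z ≠ 0) :
    ∀ k : Fin 3,
      ((fun Δx : ℝ => etaMP f z Δx / (betaTilde f z ξ δ k Δx) ^ 2)
        =O[𝓝[>] (0 : ℝ)] fun Δx => Δx ^ 2) ∧
      ((fun Δx : ℝ => omegaMP f z ξ δ k Δx - dIdeal k)
        =O[𝓝[>] (0 : ℝ)] fun Δx => Δx ^ 2) := by
  -- abbreviations
  have hfT : ContDiff ℝ (⊤ : ℕ∞) f := hf.of_le (by simp)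
  set c3 : ℝ := iteratedDeriv 3 f z with hc3
  have T : ∀ a : ℝ, (fun h : ℝ => f (z + a * h) - (f z + a ^ 3 * c3 / 6 * h ^ 3))
      =O[𝓝[>] (0:ℝ)] fun h => h ^ 4 := fun a => taylor3 f hfT z a hf' hf''
  have e20 : ∀ h : ℝ, L20 f z h
      = f (z + (-5/2 : ℝ) * h) - 2 * f (z + (-3/2 : ℝ) * h) + f (z + (-1/2 : ℝ) * h) := by
    intro h
    rw [L20, gridVal_eq f z h (-2) (-5/2 : ℝ) (by push_cast; norm_num),
      gridVal_eq f z h (-1) (-3/2 : ℝ) (by push_cast; norm_num),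
      gridVal_eq f z h 0 (-1/2 : ℝ) (by push_cast; norm_num)]
  have e21 : ∀ h : ℝ, L21 f z h
      = f (z + (-3/2 : ℝ) * h) - 2 * f (z + (-1/2 : ℝ) * h) + f (z + (1/2 : ℝ) * h) := by
    intro h
    rw [L21, gridVal_eq f z h (-1) (-3/2 : ℝ) (by push_cast; norm_num),
      gridVal_eq f z h 0 (-1/2 : ℝ) (by push_cast; norm_num),
      gridVal_eq f z h 1 (1/2 : ℝ) (by push_cast; norm_num)]
  have e22 : ∀ h : ℝ, L22 f z h
      = f (z + (-1/2 : ℝ) * h) - 2 * f (z + (1/2 : ℝ) * h) + f (z + (3/2 : ℝ) * h) := by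
    intro h
    rw [L22, gridVal_eq f z h 0 (-1/2 : ℝ) (by push_cast; norm_num),
      gridVal_eq f z h 1 (1/2 : ℝ) (by push_cast; norm_num),
      gridVal_eq f z h 2 (3/2 : ℝ) (by push_cast; norm_num)]
  -- Taylor combinations for the second differences
  have hL20 : (fun h : ℝ => L20 f z h - (-(9:ℝ)/6 * c3) * h ^ 3) =O[𝓝[>] (0:ℝ)]
      fun h => h ^ 4 := by
    have comb := ((T (-5/2)).sub ((T (-3/2)).const_mul_left 2)).add (T (-1/2))
    refine comb.congr_left fun h => ?_
    rw [e20 h]; ring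
  have hL21 : (fun h : ℝ => L21 f z h - (-(3:ℝ)/6 * c3) * h ^ 3) =O[𝓝[>] (0:ℝ)]
      fun h => h ^ 4 := by
    have comb := ((T (-3/2)).sub ((T (-1/2)).const_mul_left 2)).add (T (1/2))
    refine comb.congr_left fun h => ?_
    rw [e21 h]; ring
  have hL22 : (fun h : ℝ => L22 f z h - ((3:ℝ)/6 * c3) * h ^ 3) =O[𝓝[>] (0:ℝ)]
      fun h => h ^ 4 := by
    have comb := ((T (-1/2)).sub ((T (1/2)).const_mul_left 2)).add (T (3/2))
    refine comb.congr_left fun h => ?_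
    rw [e22 h]; ring
  -- global indicator
  have hS4 : (fun h : ℝ => L20 f z h + L22 f z h - 2 * L21 f z h) =O[𝓝[>] (0:ℝ)]
      fun h => h ^ 4 := by
    have comb := ((((T (-5/2)).sub ((T (-3/2)).const_mul_left 4)).add
      ((T (-1/2)).const_mul_left 6)).sub ((T (1/2)).const_mul_left 4)).add (T (3/2))
    refine comb.congr_left fun h => ?_
    rw [e20 h, e21 h, e22 h]; ring
  have hη : (fun h : ℝ => etaMP f z h) =O[𝓝[>] (0:ℝ)] fun h => h ^ 8 := by
    have h2 := hS4.pow 2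
    have h48 : (fun h : ℝ => (h ^ 4) ^ 2) =O[𝓝[>] (0:ℝ)] fun h => h ^ 8 := by
      apply Asymptotics.isBigO_of_le' (c := 1)
      intro h
      simp [← pow_mul]
    exact ((h2.trans h48).congr_left fun h => by rw [etaMP])
  have hηpos : ∀ h, 0 ≤ etaMP f z h := fun h => sq_nonneg _
  have hδ1 : 0 < 1 + δ := by linarith [hδ.1]
  have hδ2 : 0 < 1 - δ := by linarith [hδ.2]
  have hc3ne : c3 ≠ 0 := hf'''
  -- part 1 for each k
  have hpart1 : ∀ k : Fin 3,
      (fun Δx : ℝ => etaMP f z Δx / (betaTilde f z ξ δ k Δx) ^ 2)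
        =O[𝓝[>] (0 : ℝ)] fun Δx => Δx ^ 2 := by
    intro k
    fin_cases k
    · refine eta_div_beta (L20 f z) (betaTilde f z ξ δ 0) (etaMP f z)
        (-(9:ℝ)/6 * c3) (mul_ne_zero (by norm_num) hc3ne) hL20 1 (fun h => ?_) hη hηpos
      have hb : betaTilde f z ξ δ 0 h = ξ * |L10 f z h| + |L20 f z h| := by
        simp [betaTilde, betaNS]
      have habs : abs (ξ * |L10 f z h| + |L20 f z h|) = ξ * |L10 f z h| + |L20 f z h| :=
        abs_of_nonneg (by have := mul_nonneg hξ.le (abs_nonneg (L10 f z h)); positivity)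
      rw [hb, one_mul, habs]
      have := mul_nonneg hξ.le (abs_nonneg (L10 f z h))
      linarith
    · refine eta_div_beta (L21 f z) (betaTilde f z ξ δ 1) (etaMP f z)
        (-(3:ℝ)/6 * c3) (mul_ne_zero (by norm_num) hc3ne) hL21 ((1+δ)⁻¹)
        (fun h => ?_) hη hηpos
      have hb : betaTilde f z ξ δ 1 h = (1 + δ) * (ξ * |L11 f z h| + |L21 f z h|) := by
        simp [betaTilde, betaNS]
      have habs : abs ((1 + δ) * (ξ * |L11 f z h| + |L21 f z h|))
          = (1 + δ) * (ξ * |L11 f z h| + |L21 f z h|) :=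
        abs_of_nonneg (mul_nonneg hδ1.le
          (by have := mul_nonneg hξ.le (abs_nonneg (L11 f z h)); positivity))
      rw [hb, habs, ← mul_assoc, inv_mul_cancel₀ hδ1.ne', one_mul]
      have := mul_nonneg hξ.le (abs_nonneg (L11 f z h))
      linarith
    · refine eta_div_beta (L22 f z) (betaTilde f z ξ δ 2) (etaMP f z)
        ((3:ℝ)/6 * c3) (mul_ne_zero (by norm_num) hc3ne) hL22 ((1-δ)⁻¹)
        (fun h => ?_) hη hηpos
      have hb : betaTilde f z ξ δ 2 h = (1 - δ) * (ξ * |L11 f z h| + |L22 f z h|) := by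
        simp [betaTilde, betaNS]
      have habs : abs ((1 - δ) * (ξ * |L11 f z h| + |L22 f z h|))
          = (1 - δ) * (ξ * |L11 f z h| + |L22 f z h|) :=
        abs_of_nonneg (mul_nonneg hδ2.le
          (by have := mul_nonneg hξ.le (abs_nonneg (L11 f z h)); positivity))
      rw [hb, habs, ← mul_assoc, inv_mul_cancel₀ hδ2.ne', one_mul]
      have := mul_nonneg hξ.le (abs_nonneg (L11 f z h))
      linarith
  intro k
  refine ⟨hpart1 k, ?_⟩
  -- part 2
  set r : Fin 3 → ℝ → ℝ := fun j h => etaMP f z h / (betaTilde f z ξ δ j h) ^ 2 with hr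
  have hrnn : ∀ j h, 0 ≤ r j h := fun j h => div_nonneg (hηpos h) (sq_nonneg _)
  set S : ℝ → ℝ := fun h => alphaMP f z ξ δ 0 h + alphaMP f z ξ δ 1 h + alphaMP f z ξ δ 2 h
    with hSdef
  have hαr : ∀ (j : Fin 3) (h : ℝ), alphaMP f z ξ δ j h = dIdeal j * (1 + r j h) :=
    fun j h => rfl
  have hd0 : dIdeal 0 = 1/10 := by norm_num [dIdeal]
  have hd1 : dIdeal 1 = 6/10 := by norm_num [dIdeal]
  have hd2 : dIdeal 2 = 3/10 := by norm_num [dIdeal]; rfl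
  have hS1 : ∀ h, 1 ≤ S h := by
    intro h
    have h0 := hrnn 0 h; have h1 := hrnn 1 h; have h2 := hrnn 2 h
    simp only [hSdef, hαr, hd0, hd1, hd2]
    linarith
  have hSO : (fun h => S h - 1) =O[𝓝[>] (0:ℝ)] fun h => h ^ 2 := by
    have comb := (((hpart1 0).const_mul_left (dIdeal 0)).add
      ((hpart1 1).const_mul_left (dIdeal 1))).add ((hpart1 2).const_mul_left (dIdeal 2))
    refine comb.congr_left fun h => ?_
    simp only [hSdef, hαr, hd0, hd1, hd2, hr]
    ring
  have hαO : (fun h => alphaMP f z ξ δ k h - dIdeal k) =O[𝓝[>] (0:ℝ)] fun h => h ^ 2 := by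
    have comb := (hpart1 k).const_mul_left (dIdeal k)
    refine comb.congr_left fun h => ?_
    simp only [hαr, hr]
    ring
  have hN : (fun h => alphaMP f z ξ δ k h - dIdeal k * S h) =O[𝓝[>] (0:ℝ)]
      fun h => h ^ 2 := by
    have comb := hαO.sub (hSO.const_mul_left (dIdeal k))
    refine comb.congr_left fun h => ?_
    ring
  refine (Asymptotics.isBigO_of_le' (c := 1)
    (g := fun h => alphaMP f z ξ δ k h - dIdeal k * S h) _ fun h => ?_).trans hN
  have hSh := hS1 h
  have hSne : S h ≠ 0 := by linarith
  have hω : omegaMP f z ξ δ k h - dIdeal k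
      = (alphaMP f z ξ δ k h - dIdeal k * S h) / S h := by
    rw [omegaMP]
    show alphaMP f z ξ δ k h / S h - dIdeal k = _
    field_simp
  rw [hω, one_mul, Real.norm_eq_abs, Real.norm_eq_abs, abs_div]
  rw [abs_of_nonneg (by linarith : (0:ℝ) ≤ S h)]
  exact div_le_self (abs_nonneg _) hSh
end
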